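/- Let n ≥ 2 and let W ∈ ℂⁿ be a unit vector (with respect to the standard Hermitian inner product ⟨·,·⟩). Then there exist μ ∈ ℂ with |μ| = 1, vectors X, Y ∈ ℂⁿ with all coordinates real and orthonormal (⟨X,X⟩ = ⟨Y,Y⟩ = 1, ⟨X,Y⟩ = 0), and t ∈ [0, π/4], such that W = μ·(cos t · X + sin t · i·Y). -/

import Mathlib

/-!
Multiplying `W` by a unit complex number, we may assume that `∑ⱼ Wⱼ²` is a nonnegative real.
Writing `W = a + i b` with `a, b` real vectors, this says `‖a‖² - ‖b‖² ≥ 0` and `⟪a, b⟫ = 0`,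
so `a = cos t • X` and `b = sin t • Y` with `X, Y` orthonormal and `t ∈ [0, π/4]`. When `b = 0`,
`Y` is any real unit vector orthogonal to `X`.
-/

open Real Set Module

theorem exists_mem_Icc_cos_eq_sin_eq {p q : ℝ} (hq : 0 ≤ q) (hqp : q ≤ p) (h : p ^ 2 + q ^ 2 = 1) :
    ∃ t ∈ Icc 0 (π / 4), cos t = p ∧ sin t = q := by
  have hp1 : p ≤ 1 := by nlinarith
  refine ⟨arccos p, ⟨arccos_nonneg p, arccos_le_pi_div_four.mpr ?_⟩,
    cos_arccos (by linarith) hp1, ?_⟩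
  · rw [div_le_iff₀ two_pos, sqrt_le_left (by nlinarith)]
    nlinarith
  · rw [sin_arccos, ← h, add_sub_cancel_left, sqrt_sq hq]

section InnerProductSpace

variable {𝕜 E : Type*} [RCLike 𝕜] [NormedAddCommGroup E] [InnerProductSpace 𝕜 E]

theorem exists_norm_eq_one_inner_eq_zero (hE : 2 ≤ finrank 𝕜 E) (x : E) :
    ∃ y : E, ‖y‖ = 1 ∧ inner 𝕜 x y = 0 := by
  have hspan : (𝕜 ∙ x) ≠ ⊤ := fun h => by
    have := finrank_span_le_card (R := 𝕜) ({x} : Set E)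
    rw [h, finrank_top, Set.toFinset_singleton, Finset.card_singleton] at this
    omega
  obtain ⟨y, hy, hy0⟩ := Submodule.exists_mem_ne_zero_of_ne_bot
    (mt Submodule.orthogonal_eq_bot_iff.mp hspan)
  refine ⟨(‖y‖⁻¹ : 𝕜) • y, norm_smul_inv_norm hy0, ?_⟩
  rw [inner_smul_right, Submodule.mem_orthogonal_singleton_iff_inner_right.mp hy, mul_zero]

theorem exists_norm_eq_one_inner_eq_zero_eq_norm_smul (hE : 2 ≤ finrank 𝕜 E) {x b : E}
    (hb : inner 𝕜 x b = 0) : ∃ y : E, ‖y‖ = 1 ∧ inner 𝕜 x y = 0 ∧ b = (‖b‖ : 𝕜) • y := by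
  rcases eq_or_ne b 0 with rfl | hb0
  · obtain ⟨y, hy, hxy⟩ := exists_norm_eq_one_inner_eq_zero hE x
    exact ⟨y, hy, hxy, by rw [norm_zero, RCLike.ofReal_zero, zero_smul]⟩
  · refine ⟨(‖b‖⁻¹ : 𝕜) • b, norm_smul_inv_norm hb0, by rw [inner_smul_right, hb, mul_zero], ?_⟩
    exact (smul_inv_smul₀ (RCLike.ofReal_ne_zero.mpr (norm_ne_zero_iff.mpr hb0)) b).symm

end InnerProductSpace

section RealInnerProductSpace

variable {E : Type*} [NormedAddCommGroup E] [InnerProductSpace ℝ E]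

theorem exists_orthonormal_cos_sin_smul (hE : 2 ≤ finrank ℝ E) {a b : E}
    (hab : inner ℝ a b = 0) (hba : ‖b‖ ≤ ‖a‖) (hnorm : ‖a‖ ^ 2 + ‖b‖ ^ 2 = 1) :
    ∃ (X Y : E) (t : ℝ), ‖X‖ = 1 ∧ ‖Y‖ = 1 ∧ inner ℝ X Y = 0 ∧ t ∈ Icc 0 (π / 4) ∧
      a = cos t • X ∧ b = sin t • Y := by
  obtain ⟨t, ht, hcos, hsin⟩ := exists_mem_Icc_cos_eq_sin_eq (norm_nonneg b) hba hnorm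
  have ha0 : a ≠ 0 := by
    rintro rfl
    rw [norm_zero] at hba hnorm
    nlinarith [norm_nonneg b]
  have hXb : inner ℝ (‖a‖⁻¹ • a) b = 0 := by rw [real_inner_smul_left, hab, mul_zero]
  obtain ⟨Y, hY, hXY, hbY⟩ := exists_norm_eq_one_inner_eq_zero_eq_norm_smul hE hXb
  refine ⟨‖a‖⁻¹ • a, Y, t, norm_smul_inv_norm ha0, hY, hXY, ht, ?_, by rw [hsin]; exact hbY⟩
  rw [hcos, smul_inv_smul₀ (norm_ne_zero_iff.mpr ha0)]

end RealInnerProductSpace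

theorem Complex.exists_norm_eq_one_mul_sq_eq (c : ℂ) : ∃ μ : ℂ, ‖μ‖ = 1 ∧ c = μ ^ 2 * ‖c‖ := by
  refine ⟨Complex.exp ((c.arg / 2 : ℝ) * I), norm_exp_ofReal_mul_I _, ?_⟩
  have hsq : Complex.exp ((c.arg / 2 : ℝ) * I) ^ 2 = Complex.exp (c.arg * I) := by
    rw [← exp_nat_mul]
    push_cast
    ring_nf
  rw [hsq, mul_comm, norm_mul_exp_arg_mul_I]

namespace EuclideanSpace

variable {ι : Type*}

def ofReal (v : EuclideanSpace ℝ ι) : EuclideanSpace ℂ ι := WithLp.toLp 2 fun j => (v j : ℂ)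

def re (W : EuclideanSpace ℂ ι) : EuclideanSpace ℝ ι := WithLp.toLp 2 fun j => (W j).re

def im (W : EuclideanSpace ℂ ι) : EuclideanSpace ℝ ι := WithLp.toLp 2 fun j => (W j).im

@[simp] theorem ofReal_apply (v : EuclideanSpace ℝ ι) (j : ι) : ofReal v j = v j := rfl

@[simp] theorem re_apply (W : EuclideanSpace ℂ ι) (j : ι) : re W j = (W j).re := rfl

@[simp] theorem im_apply (W : EuclideanSpace ℂ ι) (j : ι) : im W j = (W j).im := rfl

theorem ofReal_smul (r : ℝ) (v : EuclideanSpace ℝ ι) : ofReal (r • v) = r • ofReal v := by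
  ext j
  simp

theorem ofReal_re_add_I_smul_ofReal_im (W : EuclideanSpace ℂ ι) :
    ofReal (re W) + Complex.I • ofReal (im W) = W := by
  ext j
  simp only [PiLp.add_apply, PiLp.smul_apply, ofReal_apply, re_apply, im_apply, smul_eq_mul]
  rw [mul_comm, Complex.re_add_im]

variable [Fintype ι]

theorem inner_ofReal_ofReal (u v : EuclideanSpace ℝ ι) :
    inner ℂ (ofReal u) (ofReal v) = (inner ℝ u v : ℂ) := by
  simp [PiLp.inner_apply]

theorem norm_sq_eq_norm_re_sq_add_norm_im_sq (W : EuclideanSpace ℂ ι) :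
    ‖W‖ ^ 2 = ‖re W‖ ^ 2 + ‖im W‖ ^ 2 := by
  rw [EuclideanSpace.norm_sq_eq, EuclideanSpace.real_norm_sq_eq, EuclideanSpace.real_norm_sq_eq,
    ← Finset.sum_add_distrib]
  congr 1 with j
  rw [Complex.sq_norm, Complex.normSq_apply, re_apply, im_apply, sq, sq]

theorem re_sum_sq (W : EuclideanSpace ℂ ι) : (∑ j, W j ^ 2).re = ‖re W‖ ^ 2 - ‖im W‖ ^ 2 := by
  simp only [EuclideanSpace.real_norm_sq_eq, Complex.re_sum, ← Finset.sum_sub_distrib]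
  simp [sq]

theorem im_sum_sq (W : EuclideanSpace ℂ ι) : (∑ j, W j ^ 2).im = 2 * inner ℝ (re W) (im W) := by
  simp only [PiLp.inner_apply, Complex.im_sum, Finset.mul_sum]
  simp [sq, mul_comm, two_mul]

theorem exists_norm_eq_one_smul_sum_sq_eq_norm (W : EuclideanSpace ℂ ι) :
    ∃ (μ : ℂ) (V : EuclideanSpace ℂ ι), ‖μ‖ = 1 ∧ W = μ • V ∧ ∑ j, V j ^ 2 = ‖∑ j, W j ^ 2‖ := by
  obtain ⟨μ, hμ, hc⟩ := Complex.exists_norm_eq_one_mul_sq_eq (∑ j, W j ^ 2)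
  have hμ0 : μ ≠ 0 := norm_ne_zero_iff.mp (by rw [hμ]; exact one_ne_zero)
  refine ⟨μ, μ⁻¹ • W, hμ, (smul_inv_smul₀ hμ0 W).symm, ?_⟩
  simp only [PiLp.smul_apply, smul_eq_mul, mul_pow, ← Finset.mul_sum]
  nth_rw 1 [hc]
  rw [← mul_assoc, ← mul_pow, inv_mul_cancel₀ hμ0, one_pow, one_mul]

theorem inner_re_im_eq_zero_and_norm_im_le (W : EuclideanSpace ℂ ι) {r : ℝ} (hr : 0 ≤ r)
    (hW : ∑ j, W j ^ 2 = r) : inner ℝ (re W) (im W) = 0 ∧ ‖im W‖ ≤ ‖re W‖ := by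
  have hre := re_sum_sq W
  have him := im_sum_sq W
  rw [hW, Complex.ofReal_re] at hre
  rw [hW, Complex.ofReal_im] at him
  refine ⟨by linarith, (pow_le_pow_iff_left₀ (norm_nonneg _) (norm_nonneg _) two_ne_zero).mp ?_⟩
  linarith

end EuclideanSpace

theorem canonical_form_of_unit_vector
    (n : ℕ) (hn : 2 ≤ n) (W : EuclideanSpace ℂ (Fin n)) (hW : ‖W‖ = 1) :
    ∃ (μ : ℂ) (X Y : EuclideanSpace ℂ (Fin n)) (t : ℝ),
      ‖μ‖ = 1 ∧
      (∀ j, (X j).im = 0) ∧ (∀ j, (Y j).im = 0) ∧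
      (inner ℂ X X : ℂ) = 1 ∧ (inner ℂ Y Y : ℂ) = 1 ∧ (inner ℂ X Y : ℂ) = 0 ∧
      t ∈ Set.Icc (0 : ℝ) (Real.pi / 4) ∧
      W = μ • (Real.cos t • X + Real.sin t • (Complex.I • Y)) := by
  open EuclideanSpace in
  obtain ⟨μ, V, hμ, rfl, hV⟩ := exists_norm_eq_one_smul_sum_sq_eq_norm W
  obtain ⟨horth, hle⟩ := inner_re_im_eq_zero_and_norm_im_le V (norm_nonneg _) hV
  rw [norm_smul, hμ, one_mul] at hW
  have hnorm : ‖re V‖ ^ 2 + ‖im V‖ ^ 2 = 1 := by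
    rw [← norm_sq_eq_norm_re_sq_add_norm_im_sq, hW, one_pow]
  obtain ⟨X, Y, t, hX, hY, hXY, ht, hre, him⟩ :=
    exists_orthonormal_cos_sin_smul (by rwa [finrank_euclideanSpace_fin]) horth hle hnorm
  refine ⟨μ, ofReal X, ofReal Y, t, hμ, fun j => Complex.ofReal_im _,
    fun j => Complex.ofReal_im _, ?_, ?_, ?_, ht, ?_⟩
  · rw [inner_ofReal_ofReal, real_inner_self_eq_norm_sq, hX, one_pow, Complex.ofReal_one]
  · rw [inner_ofReal_ofReal, real_inner_self_eq_norm_sq, hY, one_pow, Complex.ofReal_one]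
  · rw [inner_ofReal_ofReal, hXY, Complex.ofReal_zero]
  · rw [← ofReal_re_add_I_smul_ofReal_im V, hre, him, ofReal_smul, ofReal_smul,
      smul_comm Complex.I]
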